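/- (Dilcher's identity) For any positive integers n and s, ∑_{k=1}^n [n choose k]_q (-1)^k q^{binom(k,2)+sk} / [k]_q^s = - ∑_{1≤j_1≤j_2≤⋯≤j_s≤n} ∏_{i=1}^s q^{j_i}/[j_i]_q. -/

import Mathlib

open scoped Classical

/-- The Gaussian `q`-binomial coefficient `[n choose k]_q = ∏_{i=1}^k (1-q^{n-k+i})/(1-q^i)`. -/
noncomputable def qbinom (q : ℂ) (n k : ℕ) : ℂ :=
  ∏ i ∈ Finset.range k, (1 - q ^ (n - k + 1 + i)) / (1 - q ^ (1 + i))

/-- The `q`-integer `[k]_q = (1-q^k)/(1-q)`. -/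
noncomputable def qint (q : ℂ) (k : ℕ) : ℂ := (1 - q ^ k) / (1 - q)

/-!
Write `L(n, s)` for the left side and `h(n, s)` for the sum over weakly increasing tuples, a
complete homogeneous symmetric polynomial in the weights `w j = q^j / [j]_q`. Splitting off the
tuples with `j_s = n + 1` gives `h(n+1, s+1) = h(n, s+1) + w (n+1) h(n+1, s)`. The `q`-Pascal rule
`[n+1 choose k] = [n choose k] + q^{n+1-k} [n choose k-1]`, followed by the absorption identity
`[n choose k-1] / [k] = [n+1 choose k] / [n+1]`, shows that `L` satisfies the same recursion
with the opposite sign. The boundary values agree: `L(0, s+1) = 0 = h(0, s+1)`, and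
`L(n, 0) = -1 = -h(n, 0)` for `n ≥ 1`, because `1 + L(n, 0) = ∏_{i<n} (1 - q^i)` is the
`q`-binomial theorem at `x = -1`.
-/

open Finset

lemma Fin.monotone_snoc_iff {α : Type*} [Preorder α] {n : ℕ} {g : Fin n → α} {a : α} :
    Monotone (Fin.snoc g a : Fin (n + 1) → α) ↔ Monotone g ∧ ∀ i, g i ≤ a := by
  refine ⟨fun h => ⟨fun i j hij => ?_, fun i => ?_⟩, fun ⟨hg, ha⟩ => ?_⟩
  · simpa using h (Fin.castSucc_le_castSucc_iff.2 hij)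
  · simpa using h (Fin.le_last i.castSucc)
  · rw [Fin.monotone_iff_le_succ]
    intro i
    obtain ⟨j, hj⟩ | h := Fin.eq_castSucc_or_eq_last i.succ
    · rw [hj, Fin.snoc_castSucc, Fin.snoc_castSucc]
      exact hg (Fin.castSucc_lt_castSucc_iff.1 (hj ▸ Fin.castSucc_lt_succ)).le
    · rw [h, Fin.snoc_castSucc, Fin.snoc_last]
      exact ha i

lemma sum_Icc_one_eq_sum_range {M : Type*} [AddCommMonoid M] (f : ℕ → M) (n : ℕ) :
    ∑ k ∈ Icc 1 n, f k = ∑ k ∈ range n, f (k + 1) := by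
  rw [← Ico_add_one_right_eq_Icc, sum_Ico_eq_sum_range]
  simp only [add_tsub_cancel_right, add_comm 1]

section CompleteHomogeneous

variable {R : Type*} [CommSemiring R]

noncomputable def completeHomSum (w : ℕ → R) (n s : ℕ) : R :=
  ∑ f ∈ (Fintype.piFinset fun _ : Fin s => Icc 1 n).filter (fun f => Monotone f),
    ∏ i : Fin s, w (f i)

lemma completeHomSum_zero_right (w : ℕ → R) (n : ℕ) : completeHomSum w n 0 = 1 := by
  simp [completeHomSum, filter_true_of_mem, Subsingleton.monotone]

lemma completeHomSum_zero_left (w : ℕ → R) (s : ℕ) : completeHomSum w 0 (s + 1) = 0 := by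
  simp [completeHomSum]

lemma completeHomSum_succ_succ (w : ℕ → R) (n s : ℕ) :
    completeHomSum w (n + 1) (s + 1)
      = completeHomSum w n (s + 1) + w (n + 1) * completeHomSum w (n + 1) s := by
  unfold completeHomSum
  rw [← sum_filter_not_add_sum_filter _ (fun f => f (Fin.last s) = n + 1)]
  congr 1
  · congr 1
    ext f
    simp only [mem_filter, Fintype.mem_piFinset, mem_Icc]
    constructor
    · rintro ⟨⟨hf, hmono⟩, hlast⟩
      refine ⟨fun i => ⟨(hf i).1, ?_⟩, hmono⟩
      have := hf (Fin.last s)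
      have := hmono (Fin.le_last i)
      omega
    · rintro ⟨hf, hmono⟩
      have := hf (Fin.last s)
      exact ⟨⟨fun i => ⟨(hf i).1, (hf i).2.trans n.le_succ⟩, hmono⟩, by omega⟩
  · rw [mul_sum]
    refine sum_nbij' Fin.init (Fin.snoc · (n + 1)) ?_ ?_ ?_ ?_ ?_
    · simp only [mem_filter, Fintype.mem_piFinset]
      rintro f ⟨⟨hf, hmono⟩, -⟩
      exact ⟨fun i => hf _, fun i j hij => hmono (Fin.castSucc_le_castSucc_iff.2 hij)⟩
    · simp only [mem_filter, Fintype.mem_piFinset, Fin.monotone_snoc_iff, Fin.snoc_last, mem_Icc]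
      rintro g ⟨hg, hmono⟩
      refine ⟨⟨fun i => ?_, hmono, fun i => (hg i).2⟩, trivial⟩
      refine Fin.lastCases ?_ (fun j => ?_) i
      · simp
      · simpa using hg j
    · simp only [mem_filter]
      rintro f ⟨-, hlast⟩
      rw [← hlast, Fin.snoc_init_self]
    · intro g _
      exact Fin.init_snoc _ _
    · simp only [mem_filter]
      rintro f ⟨-, hlast⟩
      rw [Fin.prod_univ_castSucc, hlast, mul_comm]
      rfl

end CompleteHomogeneous

section QBinomial

variable {q : ℂ}

lemma qbinom_self {n : ℕ} (hq : ∀ i, 1 ≤ i → i ≤ n → q ^ i ≠ 1) : qbinom q n n = 1 := by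
  refine prod_eq_one fun i hi => ?_
  rw [Nat.sub_self, zero_add]
  exact div_self <| sub_ne_zero.2 (hq (1 + i) (by omega) (by rw [mem_range] at hi; omega)).symm

lemma qbinom_succ_succ_mul {n k : ℕ} (hk : k ≤ n) (hk1 : q ^ (k + 1) ≠ 1) :
    qbinom q (n + 1) (k + 1) * (1 - q ^ (k + 1)) = qbinom q n k * (1 - q ^ (n + 1)) := by
  have hlast : n + 1 - (k + 1) + 1 + k = n + 1 := by omega
  rw [qbinom, prod_range_succ, hlast, add_comm 1 k, mul_assoc,
    div_mul_cancel₀ _ (sub_ne_zero.2 hk1.symm), qbinom, Nat.add_sub_add_right]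

lemma qbinom_succ_mul {n k : ℕ} (hk : k ≤ n) :
    qbinom q (n + 1) k * (1 - q ^ (n + 1 - k)) = qbinom q n k * (1 - q ^ (n + 1)) := by
  simp only [qbinom, prod_div_distrib, div_mul_eq_mul_div]
  congr 1
  set f : ℕ → ℂ := fun i => 1 - q ^ (n + 1 - k + i)
  have h := (prod_range_succ' f k).symm.trans (prod_range_succ f k)
  simp only [f, add_zero, Nat.sub_add_cancel (Nat.le_succ_of_le hk)] at h
  convert h using 3 with i _ i _ <;> congr 2 <;> omega

lemma qbinom_succ_succ {n k : ℕ} (hk : k < n) (hk1 : q ^ (k + 1) ≠ 1) (hn1 : q ^ (n + 1) ≠ 1) :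
    qbinom q (n + 1) (k + 1) = qbinom q n (k + 1) + q ^ (n - k) * qbinom q n k := by
  refine mul_right_cancel₀ (sub_ne_zero.2 hn1.symm) ?_
  have hpow : q ^ (n - k) * q ^ (k + 1) = q ^ (n + 1) := by rw [← pow_add]; congr 1; omega
  have h1 := qbinom_succ_mul (q := q) (Nat.succ_le_of_lt hk)
  rw [Nat.add_sub_add_right] at h1
  linear_combination h1 + q ^ (n - k) * qbinom_succ_succ_mul hk.le hk1
    + qbinom q (n + 1) (k + 1) * hpow

lemma qbinom_div_qint {n k : ℕ} (hk : k ≤ n) (hk1 : q ^ (k + 1) ≠ 1) (hn1 : q ^ (n + 1) ≠ 1) :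
    qbinom q n k / qint q (k + 1) = qbinom q (n + 1) (k + 1) / qint q (n + 1) := by
  rw [qint, qint, div_div_eq_mul_div, div_div_eq_mul_div,
    div_eq_div_iff (sub_ne_zero.2 hk1.symm) (sub_ne_zero.2 hn1.symm)]
  linear_combination (1 - q) * (qbinom_succ_succ_mul hk hk1).symm

lemma sum_Icc_qbinom_succ {n : ℕ} (hq : ∀ i, 1 ≤ i → i ≤ n + 1 → q ^ i ≠ 1) (a : ℕ → ℂ) :
    ∑ k ∈ Icc 1 (n + 1), qbinom q (n + 1) k * a k
      = ∑ k ∈ Icc 1 n, qbinom q n k * a k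
        + ∑ k ∈ range (n + 1), q ^ (n - k) * qbinom q n k * a (k + 1) := by
  have pascal : ∀ k ∈ range n, qbinom q (n + 1) (k + 1) * a (k + 1)
      = qbinom q n (k + 1) * a (k + 1) + q ^ (n - k) * qbinom q n k * a (k + 1) := by
    intro k hk
    rw [mem_range] at hk
    rw [qbinom_succ_succ hk (hq _ (by omega) (by omega)) (hq _ (by omega) le_rfl), add_mul]
  rw [sum_Icc_one_eq_sum_range, sum_Icc_one_eq_sum_range, sum_range_succ, sum_range_succ _ n,
    sum_congr rfl pascal, sum_add_distrib, qbinom_self hq,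
    qbinom_self fun i h1 h2 => hq i h1 (by omega), Nat.sub_self, pow_zero]
  ring

end QBinomial

section Dilcher

variable {q : ℂ}

noncomputable def dilcherSum (q : ℂ) (n s : ℕ) : ℂ :=
  ∑ k ∈ Icc 1 n, qbinom q n k * (-1) ^ k * q ^ (Nat.choose k 2 + s * k) / (qint q k) ^ s

lemma dilcherSum_eq_sum_qbinom_mul (q : ℂ) (n s : ℕ) :
    dilcherSum q n s
      = ∑ k ∈ Icc 1 n, qbinom q n k * ((-1) ^ k * q ^ (k.choose 2 + s * k) / qint q k ^ s) := by
  simp only [dilcherSum, mul_assoc, mul_div_assoc]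

lemma dilcherSum_zero_left (q : ℂ) (s : ℕ) : dilcherSum q 0 s = 0 := by
  simp [dilcherSum]

lemma one_add_dilcherSum_zero_right {n : ℕ} (hq : ∀ i, 1 ≤ i → i ≤ n → q ^ i ≠ 1) :
    1 + dilcherSum q n 0 = ∏ i ∈ range n, (1 - q ^ i) := by
  have hform : ∀ m,
      dilcherSum q m 0 = ∑ k ∈ Icc 1 m, qbinom q m k * ((-1) ^ k * q ^ k.choose 2) := by
    simp [dilcherSum_eq_sum_qbinom_mul]
  induction n with
  | zero => simp [dilcherSum]
  | succ n ih =>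
    have hshift : ∑ k ∈ range (n + 1),
          q ^ (n - k) * qbinom q n k * ((-1) ^ (k + 1) * q ^ (k + 1).choose 2)
        = -q ^ n * ∑ k ∈ range (n + 1), qbinom q n k * ((-1) ^ k * q ^ k.choose 2) := by
      rw [mul_sum]
      refine sum_congr rfl fun k hk => ?_
      have hpow : q ^ (n - k) * q ^ (k + 1).choose 2 = q ^ n * q ^ k.choose 2 := by
        have hchoose : (k + 1).choose 2 = k + k.choose 2 := by
          simpa using Nat.choose_succ_succ' k 1
        rw [← pow_add, ← pow_add, hchoose]
        congr 1
        rw [mem_range] at hk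
        omega
      linear_combination (-(-1) ^ k * qbinom q n k) * hpow
    have hfull : ∑ k ∈ range (n + 1), qbinom q n k * ((-1) ^ k * q ^ k.choose 2)
        = 1 + dilcherSum q n 0 := by
      rw [sum_range_succ', hform, sum_Icc_one_eq_sum_range]
      simp [add_comm, qbinom]
    rw [hform, sum_Icc_qbinom_succ hq, ← hform, hshift, hfull, prod_range_succ,
      ← ih fun i h1 h2 => hq i h1 (by omega)]
    ring

lemma dilcherSum_zero_right {n : ℕ} (hn : n ≠ 0) (hq : ∀ i, 1 ≤ i → i ≤ n → q ^ i ≠ 1) :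
    dilcherSum q n 0 = -1 := by
  have h := one_add_dilcherSum_zero_right hq
  rw [prod_eq_zero (mem_range.2 (Nat.pos_of_ne_zero hn)) (by simp)] at h
  linear_combination h

lemma dilcherSum_succ_succ {n : ℕ} (s : ℕ) (hq : ∀ i, 1 ≤ i → i ≤ n + 1 → q ^ i ≠ 1) :
    dilcherSum q (n + 1) (s + 1)
      = dilcherSum q n (s + 1) + q ^ (n + 1) / qint q (n + 1) * dilcherSum q (n + 1) s := by
  rw [dilcherSum_eq_sum_qbinom_mul, sum_Icc_qbinom_succ hq, ← dilcherSum_eq_sum_qbinom_mul,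
    dilcherSum_eq_sum_qbinom_mul q (n + 1) s, sum_Icc_one_eq_sum_range, mul_sum]
  congr 1
  refine sum_congr rfl fun k hk => ?_
  rw [mem_range] at hk
  have hpow : q ^ (n - k) * q ^ ((k + 1).choose 2 + (s + 1) * (k + 1))
      = q ^ (n + 1) * q ^ ((k + 1).choose 2 + s * (k + 1)) := by
    rw [← pow_add, ← pow_add]
    congr 1
    rw [add_mul]
    omega
  calc q ^ (n - k) * qbinom q n k * ((-1) ^ (k + 1) * q ^ ((k + 1).choose 2 + (s + 1) * (k + 1))
        / qint q (k + 1) ^ (s + 1))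
      = q ^ (n - k) * q ^ ((k + 1).choose 2 + (s + 1) * (k + 1)) * (-1) ^ (k + 1)
          * (qbinom q n k / qint q (k + 1)) / qint q (k + 1) ^ s := by ring
    _ = _ := by
      rw [hpow, qbinom_div_qint (Nat.lt_succ_iff.1 hk) (hq _ (by omega) (by omega))
        (hq _ (by omega) le_rfl)]
      ring

theorem dilcherSum_eq_neg_completeHomSum {n s : ℕ} (hq : ∀ i, 1 ≤ i → i ≤ n → q ^ i ≠ 1)
    (hns : n ≠ 0 ∨ s ≠ 0) :
    dilcherSum q n s = -completeHomSum (fun j => q ^ j / qint q j) n s := by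
  induction s generalizing n with
  | zero =>
    rw [dilcherSum_zero_right (hns.resolve_right (by simp)) hq, completeHomSum_zero_right]
  | succ s ihs =>
    induction n with
    | zero => rw [dilcherSum_zero_left, completeHomSum_zero_left, neg_zero]
    | succ n ihn =>
      rw [dilcherSum_succ_succ s hq, completeHomSum_succ_succ,
        ihn (fun i h1 h2 => hq i h1 (by omega)) (Or.inr s.succ_ne_zero),
        ihs hq (Or.inl n.succ_ne_zero)]
      ring

end Dilcher

theorem stmt_5_general (n s : ℕ) (hn : 1 ≤ n) (q : ℂ)
    (hq : ∀ i, 1 ≤ i → i ≤ n → q ^ i ≠ 1) :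
    ∑ k ∈ Finset.Icc 1 n,
        qbinom q n k * (-1) ^ k * q ^ (Nat.choose k 2 + s * k) / (qint q k) ^ s
      = - ∑ f ∈ (Fintype.piFinset fun _ : Fin s => Finset.Icc 1 n).filter
          (fun f => Monotone f),
          ∏ i : Fin s, q ^ (f i) / qint q (f i) :=
  dilcherSum_eq_neg_completeHomSum hq (Or.inl (by omega))

/-- Dilcher's identity. -/
theorem stmt_5 (n s : ℕ) (hn : 1 ≤ n) (hs : 1 ≤ s) (q : ℂ)
    (hq : ∀ i, 1 ≤ i → i ≤ n → q ^ i ≠ 1) :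
    ∑ k ∈ Finset.Icc 1 n,
        qbinom q n k * (-1) ^ k * q ^ (Nat.choose k 2 + s * k) / (qint q k) ^ s
      = - ∑ f ∈ (Fintype.piFinset fun _ : Fin s => Finset.Icc 1 n).filter
          (fun f => Monotone f),
          ∏ i : Fin s, q ^ (f i) / qint q (f i) :=
  stmt_5_general n s hn q hq
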